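/- arXiv:1802.10514 — 8 statements merged into one kernel-verified Lean document; each statement's English description precedes it below -/
import Mathlib

section
/- Let t = (t_i, t_{−i}) and t' = (t'_i, t_{−i}) be toll vectors on n parallel links differing only in coordinate i, with t_i ≤ t'_i, and let x(t), x(t') be the corresponding Wardrop equilibria (latencies strictly increasing). Then x_i(t) ≥ x_i(t'). -/
/-- If tolls only increase in coordinate i (t_i ≤ t'_i, all other
coordinates equal), then the equilibrium flow on link i does not increase:
x_i(t) ≥ x_i(t'). -/
theorem own_flow_decreasing_in_own_toll
    (n : ℕ) (ℓ : Fin n → ℝ → ℝ) (t t' xt xt' : Fin n → ℝ) (i : Fin n)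
    (hmono : ∀ j, StrictMono (ℓ j))
    (hcont : ∀ j, Continuous (ℓ j))
    (hti : t i ≤ t' i) (hoff : ∀ j, j ≠ i → t j = t' j)
    (hxt : ∀ j, 0 ≤ xt j) (hxtsum : ∑ j, xt j = 1)
    (hxt' : ∀ j, 0 ≤ xt' j) (hxt'sum : ∑ j, xt' j = 1)
    (hVI : ∀ y : Fin n → ℝ, (∀ j, 0 ≤ y j) → ∑ j, y j = 1 →
      ∑ j, (ℓ j (xt j) + t j) * (xt j - y j) ≤ 0)
    (hVI' : ∀ y : Fin n → ℝ, (∀ j, 0 ≤ y j) → ∑ j, y j = 1 →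
      ∑ j, (ℓ j (xt' j) + t' j) * (xt' j - y j) ≤ 0) :
    xt i ≥ xt' i := by
  by_contra h
  push_neg at h
  have A := hVI xt' hxt' hxt'sum
  have B := hVI' xt hxt hxtsum
  have key : ∑ j, ((ℓ j (xt j) - ℓ j (xt' j)) + (t j - t' j)) * (xt j - xt' j) ≤ 0 := by
    have h2 : ∑ j, ((ℓ j (xt j) - ℓ j (xt' j)) + (t j - t' j)) * (xt j - xt' j)
        = ∑ j, (ℓ j (xt j) + t j) * (xt j - xt' j)
          + ∑ j, (ℓ j (xt' j) + t' j) * (xt' j - xt j) := by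
      rw [← Finset.sum_add_distrib]
      exact Finset.sum_congr rfl (fun j _ => by ring)
    rw [h2]; exact add_nonpos A B
  have split : ∑ j, ((ℓ j (xt j) - ℓ j (xt' j)) + (t j - t' j)) * (xt j - xt' j)
      = (∑ j, (ℓ j (xt j) - ℓ j (xt' j)) * (xt j - xt' j))
        + (t i - t' i) * (xt i - xt' i) := by
    have hs : ∑ j, (t j - t' j) * (xt j - xt' j) = (t i - t' i) * (xt i - xt' i) := by
      refine Finset.sum_eq_single i (fun j _ hj => ?_) (fun hi => absurd (Finset.mem_univ i) hi)
      rw [hoff j hj]; ring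
    rw [← hs, ← Finset.sum_add_distrib]
    exact Finset.sum_congr rfl (fun j _ => by ring)
  have nonneg : ∀ j ∈ Finset.univ, 0 ≤ (ℓ j (xt j) - ℓ j (xt' j)) * (xt j - xt' j) := by
    intro j _
    rcases le_or_gt (xt j) (xt' j) with hle | hlt
    · { nlinarith [(hmono j).monotone hle] }
    · exact mul_nonneg (by linarith [(hmono j).monotone hlt.le]) (by linarith)
  have posi : 0 < ∑ j, (ℓ j (xt j) - ℓ j (xt' j)) * (xt j - xt' j) := by
    refine Finset.sum_pos' nonneg ⟨i, Finset.mem_univ i, ?_⟩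
    nlinarith [hmono i h]
  have nn2 : 0 ≤ (t i - t' i) * (xt i - xt' i) := by nlinarith
  rw [split] at key
  linarith
end

section
/- Under the hypotheses of the previous monotonicity setting (only coordinate i of the toll vector increases from t_i to t'_i), the effective cost on link i satisfies ℓ_i(x_i(t)) + t_i ≤ ℓ_i(x_i(t')) + t'_i. -/
/-- If only coordinate i of the toll vector increases (t_i ≤ t'_i),
then the effective cost on link i satisfies ℓ_i(x_i(t)) + t_i ≤ ℓ_i(x_i(t')) + t'_i. -/
theorem effective_cost_increasing_in_own_toll
    (n : ℕ) (ℓ : Fin n → ℝ → ℝ) (t t' xt xt' : Fin n → ℝ) (i : Fin n)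
    (hmono : ∀ j, StrictMono (ℓ j))
    (hcont : ∀ j, Continuous (ℓ j))
    (hti : t i ≤ t' i) (hoff : ∀ j, j ≠ i → t j = t' j)
    (hxt : ∀ j, 0 ≤ xt j) (hxtsum : ∑ j, xt j = 1)
    (hxt' : ∀ j, 0 ≤ xt' j) (hxt'sum : ∑ j, xt' j = 1)
    (hVI : ∀ y : Fin n → ℝ, (∀ j, 0 ≤ y j) → ∑ j, y j = 1 →
      ∑ j, (ℓ j (xt j) + t j) * (xt j - y j) ≤ 0)
    (hVI' : ∀ y : Fin n → ℝ, (∀ j, 0 ≤ y j) → ∑ j, y j = 1 →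
      ∑ j, (ℓ j (xt' j) + t' j) * (xt' j - y j) ≤ 0) :
    ℓ i (xt i) + t i ≤ ℓ i (xt' i) + t' i := by
  rcases le_or_gt (xt i) (xt' i) with hle | hgt
  · have := (hmono i).monotone hle
    linarith
  -- case xt' i < xt i
  have h1 := hVI xt' hxt' hxt'sum
  have h2 := hVI' xt hxt hxtsum
  have hsum : ∑ j, (ℓ j (xt j) - ℓ j (xt' j)) * (xt j - xt' j)
      + ∑ j, (t j - t' j) * (xt j - xt' j) ≤ 0 := by
    have heq : ∑ j, (ℓ j (xt j) - ℓ j (xt' j)) * (xt j - xt' j)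
        + ∑ j, (t j - t' j) * (xt j - xt' j)
        = ∑ j, (ℓ j (xt j) + t j) * (xt j - xt' j)
          + ∑ j, (ℓ j (xt' j) + t' j) * (xt' j - xt j) := by
      rw [← Finset.sum_add_distrib, ← Finset.sum_add_distrib]
      apply Finset.sum_congr rfl
      intro j _
      ring
    linarith [heq]
  have htoll : ∑ j, (t j - t' j) * (xt j - xt' j) = (t i - t' i) * (xt i - xt' i) := by
    apply Finset.sum_eq_single_of_mem i (Finset.mem_univ i)
    intro j _ hj
    rw [hoff j hj]
    ring
  have hnn : ∀ j : Fin n, j ∈ Finset.univ →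
      0 ≤ (ℓ j (xt j) - ℓ j (xt' j)) * (xt j - xt' j) := by
    intro j _
    rcases le_or_gt (xt j) (xt' j) with h | h
    · have := (hmono j).monotone h
      nlinarith
    · have := (hmono j).monotone h.le
      nlinarith
  have hterm : (ℓ i (xt i) - ℓ i (xt' i)) * (xt i - xt' i)
      ≤ ∑ j, (ℓ j (xt j) - ℓ j (xt' j)) * (xt j - xt' j) :=
    Finset.single_le_sum hnn (Finset.mem_univ i)
  -- so (ℓ i (xt i) - ℓ i (xt' i) + t i - t' i) * (xt i - xt' i) ≤ 0
  have hkey : (ℓ i (xt i) - ℓ i (xt' i) + (t i - t' i)) * (xt i - xt' i) ≤ 0 := by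
    nlinarith [hsum, htoll, hterm]
  nlinarith [hkey, hgt]
end

section
/- Let t = (t_i, t_{−i}) and t' = (t'_i, t_{−i}) with t_i ≤ t'_i on n parallel links with strictly increasing latencies. Then for every j ≠ i, x_j(t) ≤ x_j(t'). -/
/-- Helper: at an equilibrium (characterized by the VI), any link with positive
flow has minimal cost. -/
lemma wardrop_min_cost {n : ℕ} (c x : Fin n → ℝ)
    (hx : ∀ m, 0 ≤ x m)
    (hVI : ∀ y : Fin n → ℝ, (∀ m, 0 ≤ y m) → ∑ m, y m = 1 →
      ∑ m, c m * (x m - y m) ≤ 0)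
    (hs : ∑ m, x m = 1)
    (j k : Fin n) (hjk : j ≠ k) (hxj : 0 < x j) : c j ≤ c k := by
  set y : Fin n → ℝ := fun m =>
    x m + x j * (if m = k then 1 else 0) - x j * (if m = j then 1 else 0) with hy
  have hynn : ∀ m, 0 ≤ y m := by
    intro m
    simp only [hy]
    split_ifs with h1 h2 h2
    · exact absurd (h2.symm.trans h1) hjk
    · nlinarith [hx m, hxj.le]
    · subst h2; simp only [mul_one, mul_zero]; linarith
    · simp only [mul_zero]; linarith [hx m]
  have hysum : ∑ m, y m = 1 := by
    simp only [hy]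
    rw [Finset.sum_sub_distrib, Finset.sum_add_distrib, ← Finset.mul_sum, ← Finset.mul_sum]
    simp [hs]
  have h := hVI y hynn hysum
  have hre : ∑ m, c m * (x m - y m)
      = x j * c j - x j * c k := by
    have : ∀ m, c m * (x m - y m)
        = x j * (c m * (if m = j then 1 else 0)) - x j * (c m * (if m = k then 1 else 0)) := by
      intro m; simp only [hy]; ring
    rw [Finset.sum_congr rfl (fun m _ => this m), Finset.sum_sub_distrib,
      ← Finset.mul_sum, ← Finset.mul_sum]
    simp [mul_ite]
  rw [hre] at h
  nlinarith

/-- If only coordinate i of the toll vector increases (t_i ≤ t'_i),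
then the flow on every other link does not decrease: x_j(t) ≤ x_j(t') for j ≠ i. -/
theorem other_flow_increasing_in_own_toll
    (n : ℕ) (ℓ : Fin n → ℝ → ℝ) (t t' xt xt' : Fin n → ℝ) (i : Fin n)
    (hmono : ∀ j, StrictMono (ℓ j))
    (hcont : ∀ j, Continuous (ℓ j))
    (hti : t i ≤ t' i) (hoff : ∀ j, j ≠ i → t j = t' j)
    (hxt : ∀ j, 0 ≤ xt j) (hxtsum : ∑ j, xt j = 1)
    (hxt' : ∀ j, 0 ≤ xt' j) (hxt'sum : ∑ j, xt' j = 1)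
    (hVI : ∀ y : Fin n → ℝ, (∀ j, 0 ≤ y j) → ∑ j, y j = 1 →
      ∑ j, (ℓ j (xt j) + t j) * (xt j - y j) ≤ 0)
    (hVI' : ∀ y : Fin n → ℝ, (∀ j, 0 ≤ y j) → ∑ j, y j = 1 →
      ∑ j, (ℓ j (xt' j) + t' j) * (xt' j - y j) ≤ 0) :
    ∀ j, j ≠ i → xt j ≤ xt' j := by
  intro j hj
  by_contra hcon
  push_neg at hcon
  -- there must be a link k where xt k < xt' k
  have hk : ∃ k, xt k < xt' k := by
    by_contra hall
    push_neg at hall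
    have : ∑ m, xt' m < ∑ m, xt m :=
      Finset.sum_lt_sum (fun m _ => hall m) ⟨j, Finset.mem_univ j, hcon⟩
    rw [hxtsum, hxt'sum] at this
    exact lt_irrefl _ this
  obtain ⟨k, hkk⟩ := hk
  have hjk : j ≠ k := by
    intro h; rw [h] at hcon; exact absurd hkk (not_lt.mpr hcon.le)
  have hxj : 0 < xt j := lt_of_le_of_lt (hxt' j) hcon
  have hxk : 0 < xt' k := lt_of_le_of_lt (hxt k) hkk
  have h1 : ℓ j (xt j) + t j ≤ ℓ k (xt k) + t k :=
    wardrop_min_cost (fun m => ℓ m (xt m) + t m) xt hxt hVI hxtsum j k hjk hxj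
  have h2 : ℓ k (xt' k) + t' k ≤ ℓ j (xt' j) + t' j :=
    wardrop_min_cost (fun m => ℓ m (xt' m) + t' m) xt' hxt' hVI' hxt'sum k j
      (Ne.symm hjk) hxk
  have htk : t k ≤ t' k := by
    by_cases hki : k = i
    · rw [hki]; exact hti
    · exact le_of_eq (hoff k hki)
  have htj : t j = t' j := hoff j hj
  have hm1 : ℓ j (xt' j) < ℓ j (xt j) := (hmono j) hcon
  have hm2 : ℓ k (xt k) < ℓ k (xt' k) := (hmono k) hkk
  linarith
end

section
/- For the two-link network with ℓ_1(x_1) = x_1, ℓ_2(x_2) = a_2·x_2, the ratio of the subgame perfect equilibrium cost C(x(t)) = (a_2² + 7a_2 + 1)/(9a_2 + 9) to the optimal cost C(x*) = a_2/(a_2+1) equals (a_2² + 7a_2 + 1)/(9a_2), which tends to infinity as a_2 → ∞. -/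
open Filter

theorem tendsto_sq_add_mul_add_div_mul_atTop {c : ℝ} (hc : 0 < c) (b d : ℝ) :
    Tendsto (fun x : ℝ => (x ^ 2 + b * x + d) / (c * x)) atTop atTop := by
  have h_split :
      ∀ᶠ x in atTop, x / c + (b / c + d / (c * x)) = (x ^ 2 + b * x + d) / (c * x) := by
    filter_upwards [eventually_gt_atTop 0] with x hx
    field_simp
    ring
  have h_tail : Tendsto (fun x : ℝ => b / c + d / (c * x)) atTop (nhds (b / c + 0)) :=
    tendsto_const_nhds.add (tendsto_const_nhds.div_atTop (tendsto_id.const_mul_atTop hc))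
  exact ((tendsto_id.atTop_div_const hc).atTop_add h_tail).congr' h_split

/-- The ratio of the subgame perfect equilibrium cost
(a₂²+7a₂+1)/(9a₂+9) to the optimal cost a₂/(a₂+1) equals (a₂²+7a₂+1)/(9a₂),
and this ratio tends to infinity as a₂ → ∞. -/
theorem example_bad_ratio_unbounded :
    (∀ a2 : ℝ, 0 < a2 →
      ((a2 ^ 2 + 7 * a2 + 1) / (9 * a2 + 9)) / (a2 / (a2 + 1))
        = (a2 ^ 2 + 7 * a2 + 1) / (9 * a2)) ∧
    Tendsto (fun a2 : ℝ => (a2 ^ 2 + 7 * a2 + 1) / (9 * a2)) atTop atTop := by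
  refine ⟨fun a2 ha2 => ?_, tendsto_sq_add_mul_add_div_mul_atTop (by norm_num) 7 1⟩
  field_simp
end

section
/- Let ℓ_i(x_i) = a_i x_i + b_i, a_i > 0, b_i ≥ 0 on n parallel links with unit demand, and a price cap c ≥ 0. There is at most one pair (t, x) satisfying: (1) a_i x_i + b_i + t_i = K for all i for some constant K; (2) Σ_i x_i = 1; (3) t_i = min{(a_i + 1/(Σ_{j≠i} 1/a_j))·x_i, c} for all i; (4) x_i > 0 for all i. [Uniqueness of the c-capped subgame perfect Nash equilibrium characterization.] -/
/-!
Each link's equilibrium cost `y ↦ aᵢ y + bᵢ + min (Aᵢ y) c` is strictly increasing in its own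
flow, so a common cost level `K` determines the flow on every link, and a higher level gives
a larger flow on every link. Two equilibria carrying the same total demand therefore have
equal levels, hence equal flows, and then equal tolls.
-/

open Finset

lemma strictMono_affine_add_min {a A : ℝ} (b c : ℝ) (ha : 0 < a) (hA : 0 ≤ A) :
    StrictMono fun y : ℝ => a * y + b + min (A * y) c :=
  ((strictMono_mul_left_of_pos ha).add_const b).add_monotone
    fun _ _ hy => min_le_min_right c (mul_le_mul_of_nonneg_left hy hA)

section CommonLevel

variable {ι β : Type*} [LinearOrder β] {f : ι → ℝ → β} {x x' : ι → ℝ} {K K' : β}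

lemma le_of_common_level_le (hf : ∀ i, StrictMono (f i)) (hx : ∀ i, f i (x i) = K)
    (hx' : ∀ i, f i (x' i) = K') (hKK' : K ≤ K') (i : ι) : x i ≤ x' i :=
  (hf i).le_iff_le.mp (by rw [hx i, hx' i]; exact hKK')

lemma eq_of_common_level_of_sum_eq [Fintype ι] (hf : ∀ i, StrictMono (f i))
    (hx : ∀ i, f i (x i) = K) (hx' : ∀ i, f i (x' i) = K') (hsum : ∑ i, x i = ∑ i, x' i) :
    x = x' := by
  funext i
  rcases le_total K K' with hKK' | hK'K
  · exact (sum_eq_sum_iff_of_le fun j _ => le_of_common_level_le hf hx hx' hKK' j).mp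
      hsum i (mem_univ i)
  · exact ((sum_eq_sum_iff_of_le fun j _ => le_of_common_level_le hf hx' hx hK'K j).mp
      hsum.symm i (mem_univ i)).symm

end CommonLevel

theorem capped_spe_characterization_unique_general
    (n : ℕ) (a b : Fin n → ℝ) (c : ℝ)
    (ha : ∀ i, 0 < a i)
    (t x t' x' : Fin n → ℝ)
    (hK : ∃ K : ℝ, ∀ i, a i * x i + b i + t i = K)
    (hsum : ∑ i, x i = 1)
    (hformula : ∀ i, t i = min ((a i + 1 / (∑ j ∈ univ.erase i, 1 / a j)) * x i) c)
    (hK' : ∃ K : ℝ, ∀ i, a i * x' i + b i + t' i = K)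
    (hsum' : ∑ i, x' i = 1)
    (hformula' : ∀ i, t' i = min ((a i + 1 / (∑ j ∈ univ.erase i, 1 / a j)) * x' i) c) :
    t = t' ∧ x = x' := by
  obtain ⟨K, hK⟩ := hK
  obtain ⟨K', hK'⟩ := hK'
  have hmarkup : ∀ i, 0 ≤ a i + 1 / ∑ j ∈ univ.erase i, 1 / a j := fun i =>
    add_nonneg (ha i).le (one_div_nonneg.mpr (sum_nonneg fun j _ => (one_div_pos.mpr (ha j)).le))
  have hcost := fun i => strictMono_affine_add_min (b i) c (ha i) (hmarkup i)
  have hxx' : x = x' :=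
    eq_of_common_level_of_sum_eq hcost (fun i => hformula i ▸ hK i)
      (fun i => hformula' i ▸ hK' i) (hsum.trans hsum'.symm)
  refine ⟨funext fun i => ?_, hxx'⟩
  rw [hformula i, hformula' i, hxx']

/-- For n ≥ 2 parallel links with affine latencies and a price cap
c ≥ 0, there is at most one pair (t, x) satisfying the characterization (1)-(4)
of a c-capped subgame perfect Nash equilibrium. -/
theorem capped_spe_characterization_unique
    (n : ℕ) (hn : 2 ≤ n) (a b : Fin n → ℝ) (c : ℝ)
    (ha : ∀ i, 0 < a i) (hb : ∀ i, 0 ≤ b i) (hc : 0 ≤ c)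
    (t x t' x' : Fin n → ℝ)
    (hK : ∃ K : ℝ, ∀ i, a i * x i + b i + t i = K)
    (hsum : ∑ i, x i = 1)
    (hformula : ∀ i, t i = min ((a i + 1 / (∑ j ∈ univ.erase i, 1 / a j)) * x i) c)
    (hpos : ∀ i, 0 < x i)
    (hK' : ∃ K : ℝ, ∀ i, a i * x' i + b i + t' i = K)
    (hsum' : ∑ i, x' i = 1)
    (hformula' : ∀ i, t' i = min ((a i + 1 / (∑ j ∈ univ.erase i, 1 / a j)) * x' i) c)
    (hpos' : ∀ i, 0 < x' i) :
    t = t' ∧ x = x' :=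
  capped_spe_characterization_unique_general n a b c ha t x t' x' hK hsum hformula hK' hsum'
    hformula'
end

section
/- Define μ1(ℓ) = sup_{x, x* ≥ 0} (ℓ(x) − ℓ(x*))·x* / (ℓ(x)·x) over points where the denominator is positive. For the class of strictly increasing polynomials with nonnegative coefficients and degree at most d, μ1 ≤ d/(d+1)^((d+1)/d). -/
/-!
Writing `x* = t x`, a monomial contributes `(x^k - x*^k) x* = x^(k+1) (t - t^(k+1))`, so it suffices
to bound `t - t^(k+1)` by the constant for all `t ≥ 0` and `k ≤ d`. For `t ≤ 1` this is at most
`t - t^(d+1)`, whose maximum over `t ≥ 0` is attained at the critical point `s = (d+1)^(-1/d)`;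
the tangent line of the convex function `t^(d+1)` at `s` (Bernoulli's inequality) shows this.
For `t > 1` the expression is negative.
-/

open Polynomial

noncomputable def mu1Bound (d : ℕ) : ℝ :=
  (d : ℝ) / (((d : ℝ) + 1) ^ (((d : ℝ) + 1) / (d : ℝ)))

lemma mu1Bound_nonneg (d : ℕ) : 0 ≤ mu1Bound d := by
  unfold mu1Bound; positivity

lemma sub_pow_succ_le_of_mul_pow_eq_one {n : ℕ} {s t : ℝ} (hs : 0 < s) (ht : 0 ≤ t)
    (hsn : ((n : ℝ) + 1) * s ^ n = 1) : t - t ^ (n + 1) ≤ n * s ^ (n + 1) := by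
  have bernoulli := one_add_mul_sub_le_pow (by linarith [div_nonneg ht hs.le] : -1 ≤ t / s) (n + 1)
  have tangent : s ^ (n + 1) + (t - s) ≤ t ^ (n + 1) := by
    rw [div_pow, le_div_iff₀ (by positivity)] at bernoulli
    calc s ^ (n + 1) + (t - s) = (1 + ↑(n + 1) * (t / s - 1)) * s ^ (n + 1) := by
          have hts : t / s * s ^ (n + 1) = t * s ^ n := by rw [pow_succ]; field_simp
          push_cast
          linear_combination -((n : ℝ) + 1) * hts - (t - s) * hsn
      _ ≤ t ^ (n + 1) := bernoulli
  linear_combination tangent - s * hsn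

lemma mul_rpow_neg_inv_pow_eq_one (d : ℕ) :
    ((d : ℝ) + 1) * (((d : ℝ) + 1) ^ (-(1 / (d : ℝ)))) ^ d = 1 := by
  rcases eq_or_ne d 0 with rfl | hd
  · simp
  rw [← Real.rpow_natCast, ← Real.rpow_mul (by positivity),
    show -(1 / (d : ℝ)) * d = -1 by field_simp, Real.rpow_neg_one, mul_inv_cancel₀ (by positivity)]

lemma mu1Bound_eq (d : ℕ) :
    mu1Bound d = d * (((d : ℝ) + 1) ^ (-(1 / (d : ℝ)))) ^ (d + 1) := by
  rw [mu1Bound, ← Real.rpow_natCast, ← Real.rpow_mul (by positivity), div_eq_mul_inv,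
    ← Real.rpow_neg (by positivity)]
  congr 2
  push_cast
  ring

lemma sub_pow_succ_le_mu1Bound (d : ℕ) {t : ℝ} (ht : 0 ≤ t) : t - t ^ (d + 1) ≤ mu1Bound d := by
  rw [mu1Bound_eq]
  exact sub_pow_succ_le_of_mul_pow_eq_one (by positivity) ht (mul_rpow_neg_inv_pow_eq_one d)

lemma sub_pow_succ_le_mu1Bound_of_le {k d : ℕ} (hk : k ≤ d) {t : ℝ} (ht : 0 ≤ t) :
    t - t ^ (k + 1) ≤ mu1Bound d := by
  rcases le_total t 1 with ht1 | ht1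
  · calc t - t ^ (k + 1) ≤ t - t ^ (d + 1) :=
          sub_le_sub_left (pow_le_pow_of_le_one ht ht1 (by omega)) t
      _ ≤ mu1Bound d := sub_pow_succ_le_mu1Bound d ht
  · linarith [le_self_pow₀ ht1 (by omega : k + 1 ≠ 0), mu1Bound_nonneg d]

lemma pow_sub_pow_mul_le_mu1Bound {k d : ℕ} (hk : k ≤ d) {x y : ℝ} (hx : 0 < x) (hy : 0 ≤ y) :
    (x ^ k - y ^ k) * y ≤ mu1Bound d * (x ^ k * x) := by
  have key := sub_pow_succ_le_mu1Bound_of_le hk (div_nonneg hy hx.le)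
  calc (x ^ k - y ^ k) * y = x ^ (k + 1) * (y / x - (y / x) ^ (k + 1)) := by
        rw [div_pow]; field_simp; ring
    _ ≤ x ^ (k + 1) * mu1Bound d := by gcongr
    _ = mu1Bound d * (x ^ k * x) := by ring

lemma eval_sub_eval_mul_le_mu1Bound {p : ℝ[X]} {d : ℕ} (hcoeff : ∀ k, 0 ≤ p.coeff k)
    (hdeg : p.natDegree ≤ d) {x y : ℝ} (hx : 0 < x) (hy : 0 ≤ y) :
    (p.eval x - p.eval y) * y ≤ mu1Bound d * (p.eval x * x) := by
  have hlt : p.natDegree < d + 1 := Nat.lt_succ_of_le hdeg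
  rw [eval_eq_sum_range' hlt, eval_eq_sum_range' hlt, ← Finset.sum_sub_distrib, Finset.sum_mul,
    Finset.sum_mul, Finset.mul_sum]
  refine Finset.sum_le_sum fun k hk => ?_
  have hkd : k ≤ d := Nat.lt_succ_iff.mp (Finset.mem_range.mp hk)
  calc (p.coeff k * x ^ k - p.coeff k * y ^ k) * y = p.coeff k * ((x ^ k - y ^ k) * y) := by ring
    _ ≤ p.coeff k * (mu1Bound d * (x ^ k * x)) :=
        mul_le_mul_of_nonneg_left (pow_sub_pow_mul_le_mu1Bound hkd hx hy) (hcoeff k)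
    _ = mu1Bound d * (p.coeff k * x ^ k * x) := by ring

theorem mu1_bound_polynomials_general
    (d : ℕ) (p : Polynomial ℝ)
    (hcoeff : ∀ k, 0 ≤ p.coeff k)
    (hdeg : p.natDegree ≤ d) :
    ∀ x xs : ℝ, 0 ≤ x → 0 ≤ xs → 0 < p.eval x * x →
      (p.eval x - p.eval xs) * xs / (p.eval x * x)
        ≤ (d : ℝ) / (((d : ℝ) + 1) ^ (((d : ℝ) + 1) / (d : ℝ))) := by
  intro x xs hx hxs hden
  have hx_pos : 0 < x := hx.lt_of_ne (by rintro rfl; simp at hden)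
  rw [div_le_iff₀ hden]
  exact eval_sub_eval_mul_le_mu1Bound hcoeff hdeg hx_pos hxs

/-- For ℓ a strictly increasing polynomial with nonnegative
coefficients and degree at most d (d ≥ 1), the smoothness parameter
μ₁(ℓ) = sup (ℓ(x) − ℓ(x*))·x* / (ℓ(x)·x) is at most d/(d+1)^((d+1)/d). -/
theorem mu1_bound_polynomials
    (d : ℕ) (hd : 1 ≤ d) (p : Polynomial ℝ)
    (hcoeff : ∀ k, 0 ≤ p.coeff k)
    (hdeg : p.natDegree ≤ d)
    (hmono : StrictMonoOn (fun x => p.eval x) (Set.Ici (0 : ℝ))) :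
    ∀ x xs : ℝ, 0 ≤ x → 0 ≤ xs → 0 < p.eval x * x →
      (p.eval x - p.eval xs) * xs / (p.eval x * x)
        ≤ (d : ℝ) / (((d : ℝ) + 1) ^ (((d : ℝ) + 1) / (d : ℝ))) :=
  mu1_bound_polynomials_general d p hcoeff hdeg
end

section
/- On two parallel links with unit demand and strictly increasing latencies, suppose the zero-toll Wardrop equilibrium x(0) and an optimal flow x* satisfy x_1(0) > x*_1 and x_1(0) ≤ 1/2. Then C(x(0)) ≤ (1/(1 − μ/2))·C(x*), where μ ≥ μ1(ℓ_1) (with μ1 as defined by μ1(ℓ) = sup (ℓ(x) − ℓ(x*))x*/(ℓ(x)x)) and μ < 2. -/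
/-- Lemma 9, n = 2: If the zero-toll Wardrop equilibrium x(0)
satisfies x₁(0) > x*₁ and x₁(0) ≤ 1/2 for an optimal (feasible) flow x*, then
C(x(0)) ≤ (1/(1 − μ/2))·C(x*) for any μ < 2 bounding the smoothness parameter
μ₁(ℓ₁) from above. -/
theorem wardrop_cost_bound_via_mu1
    (ℓ1 ℓ2 : ℝ → ℝ)
    (hmono1 : StrictMono ℓ1) (hmono2 : StrictMono ℓ2)
    (hnn1 : ∀ x : ℝ, 0 ≤ x → 0 ≤ ℓ1 x) (hnn2 : ∀ x : ℝ, 0 ≤ x → 0 ≤ ℓ2 x)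
    (x01 x02 xs1 xs2 : ℝ)
    (hx01 : 0 ≤ x01) (hx02 : 0 ≤ x02) (hx0sum : x01 + x02 = 1)
    (hxs1 : 0 ≤ xs1) (hxs2 : 0 ≤ xs2) (hxssum : xs1 + xs2 = 1)
    -- variational inequality for the zero-toll Wardrop equilibrium:
    (hVI : ∀ y1 y2 : ℝ, 0 ≤ y1 → 0 ≤ y2 → y1 + y2 = 1 →
      ℓ1 x01 * (x01 - y1) + ℓ2 x02 * (x02 - y2) ≤ 0)
    (hgt : x01 > xs1) (hhalf : x01 ≤ 1 / 2)
    (μ : ℝ) (hμlt : μ < 2)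
    -- μ dominates the smoothness parameter μ₁(ℓ₁):
    (hμ : ∀ y z : ℝ, 0 ≤ y → 0 ≤ z → 0 < ℓ1 y * y →
      (ℓ1 y - ℓ1 z) * z ≤ μ * (ℓ1 y * y)) :
    ℓ1 x01 * x01 + ℓ2 x02 * x02
      ≤ (1 / (1 - μ / 2)) * (ℓ1 xs1 * xs1 + ℓ2 xs2 * xs2) := by
  have hx01pos : 0 < x01 := lt_of_le_of_lt hxs1 hgt
  have hx02pos : 0 < x02 := by linarith
  have hl1pos : 0 < ℓ1 x01 := lt_of_le_of_lt (hnn1 xs1 hxs1) (hmono1 hgt)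
  have hprod : 0 < ℓ1 x01 * x01 := mul_pos hl1pos hx01pos
  -- equal latencies at equilibrium
  have h1 := hVI 0 1 le_rfl zero_le_one (by ring)
  have h2 := hVI 1 0 zero_le_one le_rfl (by ring)
  have heq : ℓ2 x02 = ℓ1 x01 := by
    have ha : ℓ1 x01 ≤ ℓ2 x02 := by
      nlinarith [mul_pos hl1pos hx01pos]
    have hb : ℓ2 x02 ≤ ℓ1 x01 := by nlinarith
    linarith
  -- μ ≥ 0
  have hμ0 : 0 ≤ μ := by
    have := hμ x01 x01 hx01 hx01 hprod
    nlinarith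
  -- VI against x*
  have hVIs := hVI xs1 xs2 hxs1 hxs2 hxssum
  -- smoothness bound
  have hsm := hμ x01 xs1 hx01 hxs1 hprod
  -- ℓ2 x02 ≤ ℓ2 xs2
  have hl2 : ℓ2 x02 ≤ ℓ2 xs2 := (hmono2 (by linarith)).le
  have hl2' : ℓ2 x02 * xs2 ≤ ℓ2 xs2 * xs2 := mul_le_mul_of_nonneg_right hl2 hxs2
  -- key chain
  have hC0 : ℓ1 x01 * x01 + ℓ2 x02 * x02 = ℓ1 x01 := by
    rw [heq]; nlinarith
  have hkey : (1 - μ / 2) * (ℓ1 x01 * x01 + ℓ2 x02 * x02)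
      ≤ ℓ1 xs1 * xs1 + ℓ2 xs2 * xs2 := by
    have hhalfC : ℓ1 x01 * x01 ≤ (ℓ1 x01 * x01 + ℓ2 x02 * x02) / 2 := by
      rw [hC0]; nlinarith
    nlinarith
  have hpos : 0 < 1 - μ / 2 := by linarith
  have := (le_div_iff₀ hpos).mpr (by linarith [hkey] :
    (ℓ1 x01 * x01 + ℓ2 x02 * x02) * (1 - μ / 2) ≤ ℓ1 xs1 * xs1 + ℓ2 xs2 * xs2)
  calc ℓ1 x01 * x01 + ℓ2 x02 * x02
      ≤ (ℓ1 xs1 * xs1 + ℓ2 xs2 * xs2) / (1 - μ / 2) := this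
    _ = (1 / (1 - μ / 2)) * (ℓ1 xs1 * xs1 + ℓ2 xs2 * xs2) := by ring
end

section
/- For the n-link network with ℓ_i(x_i) = x_i for i = 1,…,n−1 and ℓ_n(x_n) = 1/(2(n−1)) (constant), with unit demand: the flow x = (1/(2(n−1)),…,1/(2(n−1)), 1/2) has cost C(x) = (n−1)·(1/(2(n−1)))² + 1/(2(n−1))·1/2 = 1/(2(n−1)), the optimal flow x* = (1/(4(n−1)),…,1/(4(n−1)), 3/4) has cost C(x*) = 7/(16(n−1)), and C(x)/C(x*) = 8/7. -/
open Finset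

lemma split_sum (n : ℕ) (hn : 2 ≤ n) (f : Fin n → ℝ) :
    ∑ i, f i = (∑ i ∈ univ.filter (fun i : Fin n => (i : ℕ) < n - 1), f i)
      + f ⟨n - 1, by omega⟩ := by
  have h : univ.filter (fun i : Fin n => ¬ (i : ℕ) < n - 1) = {(⟨n - 1, by omega⟩ : Fin n)} := by
    ext i
    simp only [mem_filter, mem_univ, true_and, mem_singleton, Fin.ext_iff]
    have := i.isLt
    omega
  rw [← Finset.sum_filter_add_sum_filter_not univ (fun i : Fin n => (i : ℕ) < n - 1), h,
    Finset.sum_singleton]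

lemma card_filter (n : ℕ) (hn : 2 ≤ n) :
    (univ.filter (fun i : Fin n => (i : ℕ) < n - 1)).card = n - 1 := by
  have h : univ.filter (fun i : Fin n => ¬ (i : ℕ) < n - 1) = {(⟨n - 1, by omega⟩ : Fin n)} := by
    ext i
    simp only [mem_filter, mem_univ, true_and, mem_singleton, Fin.ext_iff]
    have := i.isLt
    omega
  have := Finset.card_filter_add_card_filter_not (s := (univ : Finset (Fin n)))
    (p := fun i : Fin n => (i : ℕ) < n - 1)
  rw [h] at this
  simp [Finset.card_univ] at this
  omega

/-- For the n-link network (n ≥ 2) with ℓ_i(x)=x for i < n−1...,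
precisely ℓ_i(x_i) = x_i on the first n−1 links and constant ℓ_n = 1/(2(n−1)):
the flow putting 1/(2(n−1)) on each of the first n−1 links and 1/2 on the last
has cost 1/(2(n−1)); the optimal flow x* = (1/(4(n−1)),…,1/(4(n−1)), 3/4) has
cost 7/(16(n−1)); and the ratio is 8/7. -/
theorem example_tight_eight_sevenths (n : ℕ) (hn : 2 ≤ n) :
    let m : ℝ := (n : ℝ) - 1
    let C : (Fin n → ℝ) → ℝ := fun y =>
      ∑ i : Fin n, if (i : ℕ) < n - 1 then (y i) ^ 2 else (1 / (2 * m)) * y i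
    let x : Fin n → ℝ := fun i => if (i : ℕ) < n - 1 then 1 / (2 * m) else 1 / 2
    let xs : Fin n → ℝ := fun i => if (i : ℕ) < n - 1 then 1 / (4 * m) else 3 / 4
    -- feasibility:
    ((∀ i, 0 ≤ x i) ∧ ∑ i, x i = 1) ∧
    ((∀ i, 0 ≤ xs i) ∧ ∑ i, xs i = 1) ∧
    -- costs:
    C x = m * (1 / (2 * m)) ^ 2 + (1 / (2 * m)) * (1 / 2) ∧
    C x = 1 / (2 * m) ∧
    -- xs is optimal:
    (∀ y : Fin n → ℝ, (∀ i, 0 ≤ y i) → ∑ i, y i = 1 → C xs ≤ C y) ∧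
    C xs = 7 / (16 * m) ∧
    C x / C xs = 8 / 7 := by
  intro m C x xs
  have hm : (1 : ℝ) ≤ m := by
    simp only [m]
    have : (2 : ℝ) ≤ (n : ℝ) := by exact_mod_cast hn
    linarith
  have hm0 : m ≠ 0 := by linarith
  have hmpos : (0 : ℝ) < m := by linarith
  have hlast : ¬ ((⟨n - 1, by omega⟩ : Fin n) : ℕ) < n - 1 := by simp
  have hcard : ((univ.filter (fun i : Fin n => (i : ℕ) < n - 1)).card : ℝ) = m := by
    rw [card_filter n hn]
    simp only [m]
    have : (1 : ℕ) ≤ n := by omega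
    push_cast [this]
    ring
  -- generic cost formula: for y, C y = (∑ over filter of y i ^2) + (1/(2m)) * y last
  have hC : ∀ y : Fin n → ℝ,
      C y = (∑ i ∈ univ.filter (fun i : Fin n => (i : ℕ) < n - 1), (y i) ^ 2)
        + (1 / (2 * m)) * y ⟨n - 1, by omega⟩ := by
    intro y
    simp only [C]
    rw [split_sum n hn]
    rw [if_neg hlast]
    congr 1
    exact Finset.sum_congr rfl (fun i hi => by rw [if_pos (Finset.mem_filter.mp hi).2])
  have hconstsum : ∀ c : ℝ, (∑ _i ∈ univ.filter (fun i : Fin n => (i : ℕ) < n - 1), c) = m * c := by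
    intro c
    rw [Finset.sum_const, nsmul_eq_mul, hcard]
  have hxsum : ∑ i, x i = 1 := by
    rw [split_sum n hn x]
    simp only [x, if_neg hlast]
    rw [Finset.sum_congr rfl (fun i hi => if_pos (Finset.mem_filter.mp hi).2), hconstsum]
    field_simp
    ring
  have hxssum : ∑ i, xs i = 1 := by
    rw [split_sum n hn xs]
    simp only [xs, if_neg hlast]
    rw [Finset.sum_congr rfl (fun i hi => if_pos (Finset.mem_filter.mp hi).2), hconstsum]
    field_simp
    ring
  have hCx : C x = m * (1 / (2 * m)) ^ 2 + (1 / (2 * m)) * (1 / 2) := by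
    rw [hC x]
    simp only [x, if_neg hlast]
    rw [Finset.sum_congr rfl (fun i hi => by rw [if_pos (Finset.mem_filter.mp hi).2]),
      hconstsum]
  have hCx' : C x = 1 / (2 * m) := by
    rw [hCx]; field_simp; ring
  have hCxs : C xs = 7 / (16 * m) := by
    rw [hC xs]
    simp only [xs, if_neg hlast]
    rw [Finset.sum_congr rfl (fun i hi => by rw [if_pos (Finset.mem_filter.mp hi).2]),
      hconstsum]
    field_simp
    ring
  refine ⟨⟨fun i => ?_, hxsum⟩, ⟨fun i => ?_, hxssum⟩, hCx, hCx', ?_, hCxs, ?_⟩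
  · simp only [x]; split <;> positivity
  · simp only [xs]; split <;> positivity
  · intro y hy hsum
    rw [hCxs, hC y]
    set s := ∑ i ∈ univ.filter (fun i : Fin n => (i : ℕ) < n - 1), y i with hs
    have hylast : y ⟨n - 1, by omega⟩ = 1 - s := by
      rw [split_sum n hn y] at hsum
      linarith
    have hcs : s ^ 2 ≤ m * ∑ i ∈ univ.filter (fun i : Fin n => (i : ℕ) < n - 1), (y i) ^ 2 := by
      have := sq_sum_le_card_mul_sum_sq
        (s := univ.filter (fun i : Fin n => (i : ℕ) < n - 1)) (f := y)
      calc s ^ 2 ≤ ((univ.filter (fun i : Fin n => (i : ℕ) < n - 1)).card : ℝ)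
            * ∑ i ∈ univ.filter (fun i : Fin n => (i : ℕ) < n - 1), (y i) ^ 2 := by
            exact_mod_cast this
        _ = _ := by rw [hcard]
    rw [hylast]
    have key : 7 / (16 * m) ≤ s ^ 2 / m + (1 / (2 * m)) * (1 - s) := by
      have h : s ^ 2 / m + (1 / (2 * m)) * (1 - s) - 7 / (16 * m) = (s - 1/4) ^ 2 / m := by
        field_simp
        ring
      have hpos := div_nonneg (sq_nonneg (s - 1/4)) hmpos.le
      linarith
    have : s ^ 2 / m ≤ ∑ i ∈ univ.filter (fun i : Fin n => (i : ℕ) < n - 1), (y i) ^ 2 := by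
      rw [div_le_iff₀ hmpos]
      nlinarith
    linarith
  · rw [hCx', hCxs]
    field_simp
    ring
end
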